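/- Case j=0, m=1, r ≥ 2n+2 of CR Gagliardo–Nirenberg: let h = |f|^{1/a} and suppose ‖h‖_{ap} ≤ C‖∇h‖_μ with 1/(ap) = 1/μ - 1/(2n+2). Using ‖∇h‖_μ = (1/a)‖ |∇f|·|f|^{1/a - 1} ‖_μ ≤ (1/a)‖∇f‖_r · ‖f‖_q^{1/a - 1} (Hölder), conclude ‖f‖_p ≤ (C/a)^a ‖∇f‖_r^a ‖f‖_q^{1-a}. -/
import Mathlib


open Real MeasureTheory

lemma mul_rpow_left {c : ℝ} (hc : 0 ≤ c) (x y : ℝ) : (c * x) ^ y = c ^ y * x ^ y := by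
  rcases le_or_gt 0 x with hx | hx
  · exact Real.mul_rpow hc hx
  · rcases eq_or_lt_of_le hc with hc0 | hc0
    · subst hc0
      rcases eq_or_ne y 0 with hy | hy
      · simp [hy]
      · simp [Real.zero_rpow hy]
    · have hcx : c * x < 0 := mul_neg_of_pos_of_neg hc0 hx
      rw [Real.rpow_def_of_neg hcx, Real.rpow_def_of_neg hx,
        Real.rpow_def_of_pos hc0, Real.log_mul (ne_of_gt hc0) (ne_of_lt hx)]
      rw [add_mul, Real.exp_add]
      ring


/-- CR Gagliardo–Nirenberg, case `j = 0`, `m = 1`, `r ≥ 2n+2`: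
with `h = |f|^{1/a}`, if `‖h‖_{ap} ≤ C‖∇h‖_μ` where `1/(ap) = 1/μ - 1/(2n+2)`,
the chain rule `|∇h| = (1/a)|f|^{1/a-1}|∇f|`, and the Hölder bound
`‖|∇f|·|f|^{1/a-1}‖_μ ≤ ‖∇f‖_r·‖f‖_q^{1/a-1}` hold, then
`‖f‖_p ≤ (C/a)^a ‖∇f‖_r^a ‖f‖_q^{1-a}`. -/
theorem stmt_14 {M : Type*} [MeasurableSpace M] (μ : Measure M) [IsFiniteMeasure μ]
    (n : ℕ) (hn : 1 ≤ n) (f : M → ℝ) (gradNf gradNh : M → ℝ) (C : ℝ) (hC : 0 < C)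
    (p q r me a : ℝ) (hq : 1 ≤ q) (hr1 : 2 * (n : ℝ) + 2 ≤ r)
    (ha : 1 / 2 ≤ a) (ha1 : a < 1)
    (hme : 1 / (a * p) = 1 / me - 1 / (2 * (n : ℝ) + 2))
    (hp : 1 / p = a * (1 / r - 1 / (2 * (n : ℝ) + 2)) + (1 - a) / q)
    (hmean : ∫ x, f x ∂μ = 0)
    (hSob : (∫ x, (|f x| ^ (1 / a)) ^ (a * p) ∂μ) ^ (1 / (a * p)) ≤
      C * (∫ x, (gradNh x) ^ me ∂μ) ^ (1 / me))
    (hchain : ∀ x, gradNh x = (1 / a) * |f x| ^ (1 / a - 1) * gradNf x)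
    (hHolder : (∫ x, (gradNf x * |f x| ^ (1 / a - 1)) ^ me ∂μ) ^ (1 / me) ≤
      ((∫ x, (gradNf x) ^ r ∂μ) ^ (1 / r)) *
        ((∫ x, |f x| ^ q ∂μ) ^ (1 / q)) ^ (1 / a - 1)) :
    (∫ x, |f x| ^ p ∂μ) ^ (1 / p) ≤
      (C / a) ^ a * ((∫ x, (gradNf x) ^ r ∂μ) ^ (1 / r)) ^ a *
        ((∫ x, |f x| ^ q ∂μ) ^ (1 / q)) ^ (1 - a) := by
  -- basic positivity facts
  have ha0 : 0 < a := lt_of_lt_of_le (by norm_num) ha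
  have ha0' : a ≠ 0 := ne_of_gt ha0
  have hr0 : 0 < r := lt_of_lt_of_le (by positivity) hr1
  have hq0 : 0 < q := lt_of_lt_of_le one_pos hq
  have hN : (0:ℝ) < 2 * (n:ℝ) + 2 := by positivity
  -- me ≠ 0
  have hme0 : me ≠ 0 := by
    intro h
    rw [h] at hme
    simp at hme
    have h1 : p⁻¹ = a * (p⁻¹ * a⁻¹) := by
      rw [mul_comm p⁻¹ a⁻¹, ← mul_assoc, mul_inv_cancel₀ ha0', one_mul]
    rw [hme] at h1
    have h2 : a * (1 / r) + (1 - a) / q = 0 := by linear_combination h1 - hp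
    have p1 : 0 < a * (1 / r) := mul_pos ha0 (one_div_pos.mpr hr0)
    have p2 : 0 < (1 - a) / q := div_pos (by linarith) hq0
    linarith
  -- abbreviations
  set X := ∫ x, |f x| ^ p ∂μ with hX
  set G := (∫ x, (gradNf x) ^ r ∂μ) ^ (1 / r) with hG
  set Q := (∫ x, |f x| ^ q ∂μ) ^ (1 / q) with hQ
  have hXnn : 0 ≤ X := integral_nonneg fun x => Real.rpow_nonneg (abs_nonneg _) _
  have hQnn : 0 ≤ Q := Real.rpow_nonneg (integral_nonneg fun x => Real.rpow_nonneg (abs_nonneg _) _) _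
  -- Step 1 : rewrite the LHS of the Sobolev inequality
  have step1 : (∫ x, (|f x| ^ (1 / a)) ^ (a * p) ∂μ) ^ (1 / (a * p))
      = (X ^ (1 / p)) ^ (1 / a) := by
    have h1 : ∀ x : M, (|f x| ^ (1 / a)) ^ (a * p) = |f x| ^ p := by
      intro x
      rw [← Real.rpow_mul (abs_nonneg _)]
      congr 1
      field_simp
    simp only [h1]
    rw [← Real.rpow_mul hXnn]
    congr 1
    field_simp
  -- Step 2 : rewrite gradient norm via chain rule
  have step2 : (∫ x, (gradNh x) ^ me ∂μ) ^ (1 / me)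
      = (1 / a) * (∫ x, (gradNf x * |f x| ^ (1 / a - 1)) ^ me ∂μ) ^ (1 / me) := by
    have h1 : ∀ x : M, (gradNh x) ^ me
        = (1 / a) ^ me * (gradNf x * |f x| ^ (1 / a - 1)) ^ me := by
      intro x
      rw [hchain x]
      have : (1 / a) * |f x| ^ (1 / a - 1) * gradNf x
          = (1 / a) * (gradNf x * |f x| ^ (1 / a - 1)) := by ring
      rw [this, mul_rpow_left (by positivity)]
    simp only [h1]
    rw [integral_const_mul, mul_rpow_left (Real.rpow_nonneg (by positivity) _),
      ← Real.rpow_mul (by positivity : (0:ℝ) ≤ 1 / a),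
      mul_one_div_cancel hme0, Real.rpow_one]
  -- combine into the key inequality
  have key : (X ^ (1 / p)) ^ (1 / a) ≤ (C / a) * (G * Q ^ (1 / a - 1)) := by
    rw [← step1]
    calc (∫ x, (|f x| ^ (1 / a)) ^ (a * p) ∂μ) ^ (1 / (a * p))
        ≤ C * (∫ x, (gradNh x) ^ me ∂μ) ^ (1 / me) := hSob
      _ = (C / a) * (∫ x, (gradNf x * |f x| ^ (1 / a - 1)) ^ me ∂μ) ^ (1 / me) := by
          rw [step2]; ring
      _ ≤ (C / a) * (G * Q ^ (1 / a - 1)) :=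
          mul_le_mul_of_nonneg_left hHolder (by positivity)
  -- raise to the power a
  have hbase : 0 ≤ (X ^ (1 / p)) ^ (1 / a) := Real.rpow_nonneg (Real.rpow_nonneg hXnn _) _
  have final : ((X ^ (1 / p)) ^ (1 / a)) ^ a ≤ ((C / a) * (G * Q ^ (1 / a - 1))) ^ a :=
    Real.rpow_le_rpow hbase key (le_of_lt ha0)
  have lhs_eq : ((X ^ (1 / p)) ^ (1 / a)) ^ a = X ^ (1 / p) := by
    have hone : 1 / a * a = 1 := by field_simp
    rw [← Real.rpow_mul (Real.rpow_nonneg hXnn _), hone, Real.rpow_one]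
  have rhs_eq : ((C / a) * (G * Q ^ (1 / a - 1))) ^ a
      = (C / a) ^ a * G ^ a * Q ^ (1 - a) := by
    rw [mul_rpow_left (by positivity : (0:ℝ) ≤ C / a)]
    have h2 : (G * Q ^ (1 / a - 1)) ^ a = (Q ^ (1 / a - 1)) ^ a * G ^ a := by
      rw [mul_comm G, mul_rpow_left (Real.rpow_nonneg hQnn _)]
    rw [h2, ← Real.rpow_mul hQnn]
    have h3 : (1 / a - 1) * a = 1 - a := by field_simp
    rw [h3]; ring
  rw [lhs_eq, rhs_eq] at final
  exact final
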